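/- (Existence of the tensor singular value decomposition) Every tensor A ∈ ℝ^{n1×n2×n3} can be factorized as A = U∗S∗Vᵀ, where U ∈ ℝ^{n1×n1×n3} and V ∈ ℝ^{n2×n2×n3} are orthogonal tensors and S ∈ ℝ^{n1×n2×n3} is an f-diagonal tensor. -/

import Mathlib

open Matrix

/-- The t-product of third-order tensors, given by their frontal slices indexed by `ZMod n3`:
`(A∗B)_i = Σ_k A_k · B_{i−k}`. -/
def tProd {n1 n2 n4 n3 : ℕ} [NeZero n3] (A : ZMod n3 → Matrix (Fin n1) (Fin n2) ℝ)
    (B : ZMod n3 → Matrix (Fin n2) (Fin n4) ℝ) : ZMod n3 → Matrix (Fin n1) (Fin n4) ℝ :=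
  fun i => ∑ k : ZMod n3, A k * B (i - k)

/-- The tensor transpose of a third-order tensor: `(Aᵀ)_k = (A_{−k})ᵀ`. -/
def tTrans {n1 n2 n3 : ℕ} (A : ZMod n3 → Matrix (Fin n1) (Fin n2) ℝ) :
    ZMod n3 → Matrix (Fin n2) (Fin n1) ℝ :=
  fun k => (A (-k))ᵀ

/-- The identity tensor: frontal slice `0` is the identity matrix, all others are zero. -/
def idTensor (n n3 : ℕ) : ZMod n3 → Matrix (Fin n) (Fin n) ℝ :=
  fun k => if k = 0 then 1 else 0

/-- A tensor `Q ∈ ℝ^{n×n×n3}` is orthogonal if `Qᵀ∗Q = Q∗Qᵀ = I`. -/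
def IsOrthogonalTensor {n n3 : ℕ} [NeZero n3] (Q : ZMod n3 → Matrix (Fin n) (Fin n) ℝ) : Prop :=
  tProd (tTrans Q) Q = idTensor n n3 ∧ tProd Q (tTrans Q) = idTensor n n3

/-- A tensor is f-diagonal if every frontal slice is a diagonal matrix. -/
def IsFDiagonal {n1 n2 n3 : ℕ} (S : ZMod n3 → Matrix (Fin n1) (Fin n2) ℝ) : Prop :=
  ∀ k : ZMod n3, ∀ i : Fin n1, ∀ j : Fin n2, (i : ℕ) ≠ (j : ℕ) → S k i j = 0

/-!
The Fourier transform along the third mode turns the t-product into the product of corresponding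
frontal slices and the tensor transpose into the slice-wise conjugate transpose. So it suffices to
factor every Fourier slice as `Â_ω = Û_ω D̂_ω V̂_ωᴴ` with `Û_ω`, `V̂_ω` unitary and `D̂_ω`
rectangular diagonal, which the matrix SVD does. The slices of a real tensor satisfy
`Â_{-ω} = conj Â_ω`; choosing the factorizations with the same symmetry (real ones at the
frequencies with `-ω = ω`) makes the inverse transforms `U`, `S`, `V` real.
-/

theorem exists_equivariant_choice {α β : Type*} {ι : α → α} (hι : Function.Involutive ι)
    {c : β → β} (hc : Function.Involutive c) (P : α → β → Prop)
    (hP : ∀ a b, P a b → P (ι a) (c b)) (hex : ∀ a, ∃ b, P a b ∧ (ι a = a → c b = b)) :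
    ∃ f : α → β, ∀ a, P a (f a) ∧ f (ι a) = c (f a) := by
  -- pick a value freely on one point of each orbit `{a, ι a}`, and transport it to the other one
  let : LinearOrder α := IsWellOrder.linearOrder WellOrderingRel
  choose g hg hfix using hex
  refine ⟨fun a => if a ≤ ι a then g a else c (g (ι a)), fun a => ⟨?_, ?_⟩⟩
  · dsimp only
    split_ifs
    · exact hg a
    · simpa only [hι a] using hP _ _ (hg (ι a))
  · simp only [hι a]
    rcases lt_trichotomy a (ι a) with h | h | h
    · rw [if_neg (not_le.mpr h), if_pos h.le]
    · rw [if_pos h.ge, if_pos h.le, ← h, hfix a h.symm]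
    · rw [if_pos h.le, if_neg (not_le.mpr h), hc]

section RectDiagonal

variable {m n : ℕ} {α β : Type*}

def IsRectDiagonal [Zero α] (D : Matrix (Fin m) (Fin n) α) : Prop :=
  ∀ (i : Fin m) (j : Fin n), (i : ℕ) ≠ j → D i j = 0

def IsUnitaryDiagFactorization [CommRing α] [StarRing α] (A : Matrix (Fin m) (Fin n) α)
    (U : Matrix (Fin m) (Fin m) α) (D : Matrix (Fin m) (Fin n) α) (V : Matrix (Fin n) (Fin n) α) :
    Prop :=
  U ∈ unitaryGroup (Fin m) α ∧ V ∈ unitaryGroup (Fin n) α ∧ IsRectDiagonal D ∧ A = U * D * Vᴴ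

variable [CommRing α] [StarRing α] [CommRing β] [StarRing β]

theorem Matrix.map_mem_unitaryGroup {p : Type*} [Fintype p] [DecidableEq p] {f : α →+* β}
    (hf : ∀ x, f (star x) = star (f x)) {U : Matrix p p α} (hU : U ∈ unitaryGroup p α) :
    U.map f ∈ unitaryGroup p β := by
  rw [mem_unitaryGroup_iff] at hU ⊢
  rw [star_eq_conjTranspose, ← conjTranspose_map f hf, ← Matrix.map_mul, ← star_eq_conjTranspose,
    hU, Matrix.map_one f (map_zero f) (map_one f)]

theorem IsUnitaryDiagFactorization.map {A : Matrix (Fin m) (Fin n) α} {U D V}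
    (h : IsUnitaryDiagFactorization A U D V) {f : α →+* β} (hf : ∀ x, f (star x) = star (f x)) :
    IsUnitaryDiagFactorization (A.map f) (U.map f) (D.map f) (V.map f) := by
  obtain ⟨hU, hV, hD, rfl⟩ := h
  refine ⟨map_mem_unitaryGroup hf hU, map_mem_unitaryGroup hf hV, fun i j hij => ?_, ?_⟩
  · simp [hD i j hij]
  · rw [Matrix.map_mul, Matrix.map_mul, conjTranspose_map f hf]

end RectDiagonal

section SVD

variable {𝕜 : Type*} [RCLike 𝕜]

namespace LinearMap

open Module

variable {E F : Type*}
  [NormedAddCommGroup E] [InnerProductSpace 𝕜 E] [FiniteDimensional 𝕜 E]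
  [NormedAddCommGroup F] [InnerProductSpace 𝕜 F] [FiniteDimensional 𝕜 F]

theorem inner_map_eigenvectorBasis_adjoint_comp_self (T : E →ₗ[𝕜] F) {n : ℕ}
    (hn : finrank 𝕜 E = n) (i j : Fin n) :
    inner 𝕜 (T (T.isSymmetric_adjoint_comp_self.eigenvectorBasis hn i))
        (T (T.isSymmetric_adjoint_comp_self.eigenvectorBasis hn j)) =
      if i = j then ((T.singularValues j ^ 2 : ℝ) : 𝕜) else 0 := by
  set v := T.isSymmetric_adjoint_comp_self.eigenvectorBasis hn
  rw [← adjoint_inner_right, ← comp_apply, T.isSymmetric_adjoint_comp_self.apply_eigenvectorBasis,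
    inner_smul_right, orthonormal_iff_ite.mp v.orthonormal, T.sq_singularValues_fin hn]
  split_ifs <;> simp

/-- The singular value decomposition of `T`. -/
theorem exists_orthonormalBasis_inner_map_eq_zero (T : E →ₗ[𝕜] F) {m n : ℕ}
    (hn : finrank 𝕜 E = n) (hm : finrank 𝕜 F = m) :
    ∃ (v : OrthonormalBasis (Fin n) 𝕜 E) (u : OrthonormalBasis (Fin m) 𝕜 F),
      ∀ (i : Fin m) (j : Fin n), (i : ℕ) ≠ j → inner 𝕜 (u i) (T (v j)) = 0 := by
  set v := T.isSymmetric_adjoint_comp_self.eigenvectorBasis hn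
  set σ := T.singularValues
  have hTv : ∀ i j, inner 𝕜 (T (v i)) (T (v j)) = if i = j then ((σ j ^ 2 : ℝ) : 𝕜) else 0 :=
    T.inner_map_eigenvectorBasis_adjoint_comp_self hn
  have lt_of_ne_zero {j : ℕ} (hj : σ j ≠ 0) : j < m ∧ j < n := by
    rw [Ne, singularValues_eq_zero_iff_le_finrank_range, not_le] at hj
    exact ⟨hm ▸ hj.trans_le (Submodule.finrank_le _), hn ▸ hj.trans_le T.finrank_range_le⟩
  let w : Fin m → F := fun i =>
    if h : (i : ℕ) < n then ((σ i)⁻¹ : 𝕜) • T (v ⟨i, h⟩) else 0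
  have hw : Orthonormal 𝕜 (({i | σ i ≠ 0} : Set (Fin m)).domRestrict w) := by
    rw [orthonormal_iff_ite]
    rintro ⟨i, hi⟩ ⟨i', hi'⟩
    simp only [Set.domRestrict_apply, w, dif_pos (lt_of_ne_zero hi).2,
      dif_pos (lt_of_ne_zero hi').2, inner_smul_left, inner_smul_right, map_inv₀,
      RCLike.conj_ofReal, hTv, Fin.mk.injEq, Subtype.mk.injEq, Fin.val_inj]
    split_ifs with h
    · subst h
      have : ((σ i : ℝ) : 𝕜) ≠ 0 := RCLike.ofReal_ne_zero.mpr hi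
      push_cast
      field_simp
    · simp
  obtain ⟨u, hu⟩ := hw.exists_orthonormalBasis_extension_of_card_eq (by simp [hm])
  refine ⟨v, u, fun i j hij => ?_⟩
  by_cases hj : σ j = 0
  · have : T (v j) = 0 := by
      rw [← inner_self_eq_zero (𝕜 := 𝕜), hTv, if_pos rfl, hj]
      simp
    rw [this, inner_zero_right]
  · obtain ⟨hjm, hjn⟩ := lt_of_ne_zero hj
    have : T (v j) = (σ j : 𝕜) • u ⟨j, hjm⟩ := by
      rw [hu _ hj]
      simp [w, hjn, smul_smul, hj]
    rw [this, inner_smul_right, orthonormal_iff_ite.mp u.orthonormal,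
      if_neg (fun h => hij (congrArg Fin.val h)), mul_zero]

end LinearMap

theorem Matrix.exists_isUnitaryDiagFactorization {m n : ℕ} (A : Matrix (Fin m) (Fin n) 𝕜) :
    ∃ U D V, IsUnitaryDiagFactorization A U D V := by
  set eₘ := EuclideanSpace.basisFun (Fin m) 𝕜
  set eₙ := EuclideanSpace.basisFun (Fin n) 𝕜
  obtain ⟨v, u, huv⟩ := (toEuclideanLin A).exists_orthonormalBasis_inner_map_eq_zero
    finrank_euclideanSpace_fin finrank_euclideanSpace_fin
  refine ⟨eₘ.toBasis.toMatrix u.toBasis, LinearMap.toMatrix v.toBasis u.toBasis (toEuclideanLin A),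
    eₙ.toBasis.toMatrix v.toBasis, eₘ.toMatrix_orthonormalBasis_mem_unitary u,
    eₙ.toMatrix_orthonormalBasis_mem_unitary v, fun i j hij => ?_, ?_⟩
  · simpa [LinearMap.toMatrix_apply, OrthonormalBasis.repr_apply_apply] using huv i j hij
  · have hv : (eₙ.toBasis.toMatrix v.toBasis)ᴴ = v.toBasis.toMatrix eₙ.toBasis := by
      ext i j
      simp [eₙ, Module.Basis.toMatrix_apply, OrthonormalBasis.repr_apply_apply, PiLp.inner_apply]
    rw [hv, basis_toMatrix_mul_linearMap_toMatrix_mul_basis_toMatrix]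
    simp [eₘ, eₙ, EuclideanSpace.basisFun_toBasis, toLpLin_eq_toLin]

end SVD

theorem Matrix.exists_isUnitaryDiagFactorization_of_map_conj_eq {m n : ℕ}
    (M : Matrix (Fin m) (Fin n) ℂ) (hM : M.map (starRingEnd ℂ) = M) :
    ∃ U D V, IsUnitaryDiagFactorization M U D V ∧ U.map (starRingEnd ℂ) = U ∧
      D.map (starRingEnd ℂ) = D ∧ V.map (starRingEnd ℂ) = V := by
  have hMR : (M.map Complex.re).map Complex.ofRealHom = M := by
    ext i j
    exact Complex.conj_eq_iff_re.mp (congrFun₂ hM i j)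
  obtain ⟨U, D, V, h⟩ := exists_isUnitaryDiagFactorization (M.map Complex.re)
  refine ⟨U.map Complex.ofRealHom, D.map Complex.ofRealHom, V.map Complex.ofRealHom,
    hMR ▸ h.map fun x => (Complex.conj_ofReal x).symm, ?_, ?_, ?_⟩ <;>
  · ext i j
    simp

namespace ZMod

variable {N : ℕ} [NeZero N] {l m n : Type*}

theorem star_stdAddChar (x : ZMod N) : star (stdAddChar x : ℂ) = stdAddChar (-x) := by
  rw [stdAddChar_apply, stdAddChar_apply, AddChar.map_neg_eq_inv, Circle.coe_inv_eq_conj]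
  rfl

theorem dft_matrix_conv [Fintype m] (Φ : ZMod N → Matrix l m ℂ) (Ψ : ZMod N → Matrix m n ℂ)
    (ω : ZMod N) : 𝓕 (fun i => ∑ k, Φ k * Ψ (i - k)) ω = 𝓕 Φ ω * 𝓕 Ψ ω := by
  simp only [dft_apply, Matrix.sum_mul]
  simp only [Matrix.mul_sum, Matrix.smul_mul, Matrix.mul_smul, smul_smul, Finset.smul_sum]
  refine Finset.sum_comm.trans ?_
  refine Finset.sum_congr rfl fun k _ => Fintype.sum_equiv (Equiv.subRight k) _ _ fun j => ?_
  rw [Equiv.subRight_apply, ← AddChar.map_add_eq_mul]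
  ring_nf

theorem dft_conjTranspose_comp_neg [Fintype m] [Fintype n] (Φ : ZMod N → Matrix m n ℂ)
    (ω : ZMod N) : 𝓕 (fun k => (Φ (-k))ᴴ) ω = (𝓕 Φ ω)ᴴ := by
  simp only [dft_apply, conjTranspose_sum, conjTranspose_smul, star_stdAddChar]
  refine Fintype.sum_equiv (Equiv.neg _) _ _ fun k => ?_
  simp only [Equiv.neg_apply, neg_neg, neg_mul]

theorem dft_map_conj (Φ : ZMod N → Matrix m n ℂ) (ω : ZMod N) :
    𝓕 (fun k => (Φ k).map (starRingEnd ℂ)) ω = (𝓕 Φ (-ω)).map (starRingEnd ℂ) := by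
  ext i j
  simp [dft_apply, Matrix.sum_apply, ← star_stdAddChar]

theorem dft_ite_zero (M : Matrix m n ℂ) (ω : ZMod N) :
    𝓕 (fun k => if k = 0 then M else 0) ω = M := by
  simp [dft_apply]

theorem exists_map_ofReal_eq_invDFT (Ψ : ZMod N → Matrix m n ℂ)
    (hΨ : ∀ ω, Ψ (-ω) = (Ψ ω).map (starRingEnd ℂ)) :
    ∃ G : ZMod N → Matrix m n ℝ, (fun k => (G k).map (↑)) = 𝓕⁻ Ψ := by
  set Φ := 𝓕⁻ Ψ
  have hΦ : (fun k => (Φ k).map (starRingEnd ℂ)) = Φ := by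
    refine dft.injective (funext fun ω => ?_)
    rw [dft_map_conj, LinearEquiv.apply_symm_apply, ← hΨ, neg_neg]
  refine ⟨fun k => (Φ k).map Complex.re, funext fun k => ?_⟩
  ext i j
  exact Complex.conj_eq_iff_re.mp (congrFun₃ hΦ k i j)

end ZMod

section TensorDFT

open ZMod

variable {n1 n2 n4 n3 : ℕ}

def tComplex (A : ZMod n3 → Matrix (Fin n1) (Fin n2) ℝ) : ZMod n3 → Matrix (Fin n1) (Fin n2) ℂ :=
  fun k => (A k).map (↑)

theorem tComplex_tTrans (A : ZMod n3 → Matrix (Fin n1) (Fin n2) ℝ) :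
    tComplex (tTrans A) = fun k => (tComplex A (-k))ᴴ := by
  ext k i j
  simp [tComplex, tTrans]

theorem tComplex_idTensor (n : ℕ) :
    tComplex (idTensor n n3) = fun k => if k = 0 then 1 else 0 := by
  ext k i j
  by_cases hk : k = 0 <;> simp [tComplex, idTensor, hk, Matrix.one_apply, apply_ite]

theorem tComplex_map_conj (A : ZMod n3 → Matrix (Fin n1) (Fin n2) ℝ) :
    (fun k => (tComplex A k).map (starRingEnd ℂ)) = tComplex A := by
  ext k i j
  simp [tComplex]

variable [NeZero n3]

theorem tComplex_tProd (A : ZMod n3 → Matrix (Fin n1) (Fin n2) ℝ)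
    (B : ZMod n3 → Matrix (Fin n2) (Fin n4) ℝ) :
    tComplex (tProd A B) = fun i => ∑ k, tComplex A k * tComplex B (i - k) := by
  ext i a b
  simp [tComplex, tProd, Matrix.sum_apply, Matrix.mul_apply]

/-- The slices `Â_ω` of the Fourier transform of `A` along its third mode. -/
noncomputable def tDFT (A : ZMod n3 → Matrix (Fin n1) (Fin n2) ℝ) :
    ZMod n3 → Matrix (Fin n1) (Fin n2) ℂ :=
  𝓕 (tComplex A)

theorem tDFT_injective : Function.Injective (tDFT : (ZMod n3 → Matrix (Fin n1) (Fin n2) ℝ) → _) :=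
  dft.injective.comp fun A B h =>
    funext fun k => ext fun i j => by simpa [tComplex] using congrFun₃ h k i j

theorem tDFT_tProd (A : ZMod n3 → Matrix (Fin n1) (Fin n2) ℝ)
    (B : ZMod n3 → Matrix (Fin n2) (Fin n4) ℝ) (ω : ZMod n3) :
    tDFT (tProd A B) ω = tDFT A ω * tDFT B ω := by
  rw [tDFT, tComplex_tProd, dft_matrix_conv, tDFT, tDFT]

theorem tDFT_tTrans (A : ZMod n3 → Matrix (Fin n1) (Fin n2) ℝ) (ω : ZMod n3) :
    tDFT (tTrans A) ω = (tDFT A ω)ᴴ := by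
  rw [tDFT, tComplex_tTrans, dft_conjTranspose_comp_neg, tDFT]

theorem tDFT_idTensor (n : ℕ) (ω : ZMod n3) : tDFT (idTensor n n3) ω = 1 := by
  rw [tDFT, tComplex_idTensor, dft_ite_zero]

theorem tDFT_neg (A : ZMod n3 → Matrix (Fin n1) (Fin n2) ℝ) (ω : ZMod n3) :
    tDFT A (-ω) = (tDFT A ω).map (starRingEnd ℂ) := by
  have h := dft_map_conj (tComplex A) (-ω)
  rwa [tComplex_map_conj, neg_neg] at h

theorem exists_tDFT_eq (Ψ : ZMod n3 → Matrix (Fin n1) (Fin n2) ℂ)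
    (hΨ : ∀ ω, Ψ (-ω) = (Ψ ω).map (starRingEnd ℂ)) :
    ∃ G : ZMod n3 → Matrix (Fin n1) (Fin n2) ℝ, tDFT G = Ψ := by
  obtain ⟨G, hG⟩ := exists_map_ofReal_eq_invDFT Ψ hΨ
  refine ⟨G, ?_⟩
  change 𝓕 (fun k => (G k).map (↑)) = Ψ
  rw [hG, LinearEquiv.apply_symm_apply]

theorem IsOrthogonalTensor.of_tDFT_mem_unitaryGroup {n : ℕ} {Q : ZMod n3 → Matrix (Fin n) (Fin n) ℝ}
    (hQ : ∀ ω, tDFT Q ω ∈ unitaryGroup (Fin n) ℂ) : IsOrthogonalTensor Q := by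
  constructor <;> refine tDFT_injective (funext fun ω => ?_) <;>
    rw [tDFT_tProd, tDFT_tTrans, tDFT_idTensor, ← star_eq_conjTranspose]
  exacts [mem_unitaryGroup_iff'.mp (hQ ω), mem_unitaryGroup_iff.mp (hQ ω)]

theorem IsFDiagonal.of_tDFT {S : ZMod n3 → Matrix (Fin n1) (Fin n2) ℝ}
    (hS : ∀ ω, IsRectDiagonal (tDFT S ω)) : IsFDiagonal S := by
  intro k i j hij
  have hS' : ∀ ω, IsRectDiagonal (𝓕 (tComplex S) ω) := hS
  have h := congrFun₃ (dft.symm_apply_apply (tComplex S)) k i j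
  rw [invDFT_apply] at h
  simpa [tComplex, Matrix.sum_apply, hS' _ i j hij] using h.symm

end TensorDFT

theorem exists_tDFT_factorization {n1 n2 n3 : ℕ} [NeZero n3]
    (A : ZMod n3 → Matrix (Fin n1) (Fin n2) ℝ) :
    ∃ (U : ZMod n3 → Matrix (Fin n1) (Fin n1) ℂ) (D : ZMod n3 → Matrix (Fin n1) (Fin n2) ℂ)
      (V : ZMod n3 → Matrix (Fin n2) (Fin n2) ℂ),
      (∀ ω, IsUnitaryDiagFactorization (tDFT A ω) (U ω) (D ω) (V ω)) ∧
      (∀ ω, U (-ω) = (U ω).map (starRingEnd ℂ)) ∧ (∀ ω, D (-ω) = (D ω).map (starRingEnd ℂ)) ∧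
      (∀ ω, V (-ω) = (V ω).map (starRingEnd ℂ)) := by
  let c
      (x : Matrix (Fin n1) (Fin n1) ℂ × Matrix (Fin n1) (Fin n2) ℂ × Matrix (Fin n2) (Fin n2) ℂ) :=
    (x.1.map (starRingEnd ℂ), x.2.1.map (starRingEnd ℂ), x.2.2.map (starRingEnd ℂ))
  have hc : Function.Involutive c := fun x => by ext <;> simp [c]
  let P (ω : ZMod n3)
      (x : Matrix (Fin n1) (Fin n1) ℂ × Matrix (Fin n1) (Fin n2) ℂ × Matrix (Fin n2) (Fin n2) ℂ) :=
    IsUnitaryDiagFactorization (tDFT A ω) x.1 x.2.1 x.2.2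
  have hP : ∀ ω x, P ω x → P (-ω) (c x) := fun ω x h => by
    simpa only [P, tDFT_neg] using h.map fun z => by simp
  -- at a frequency with `-ω = ω` the slice is real, and so is its factorization
  have hex : ∀ ω, ∃ x, P ω x ∧ (-ω = ω → c x = x) := fun ω => by
    by_cases hω : -ω = ω
    · obtain ⟨U, D, V, h, hU, hD, hV⟩ :=
        exists_isUnitaryDiagFactorization_of_map_conj_eq (tDFT A ω) (by rw [← tDFT_neg, hω])
      exact ⟨(U, D, V), h, fun _ => by simp [c, hU, hD, hV]⟩
    · obtain ⟨U, D, V, h⟩ := exists_isUnitaryDiagFactorization (tDFT A ω)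
      exact ⟨(U, D, V), h, fun h' => absurd h' hω⟩
  obtain ⟨f, hf⟩ := exists_equivariant_choice neg_involutive hc P hP hex
  refine ⟨fun ω => (f ω).1, fun ω => (f ω).2.1, fun ω => (f ω).2.2, fun ω => (hf ω).1, ?_⟩
  simp only [(hf _).2, c, forall_const, and_self]

/-- Existence of the tensor singular value decomposition: every third-order real tensor
factorizes as `A = U∗S∗Vᵀ` with `U`, `V` orthogonal tensors and `S` f-diagonal. -/
theorem exists_tsvd {n1 n2 n3 : ℕ} [NeZero n3]
    (A : ZMod n3 → Matrix (Fin n1) (Fin n2) ℝ) :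
    ∃ (U : ZMod n3 → Matrix (Fin n1) (Fin n1) ℝ)
      (S : ZMod n3 → Matrix (Fin n1) (Fin n2) ℝ)
      (V : ZMod n3 → Matrix (Fin n2) (Fin n2) ℝ),
      IsOrthogonalTensor U ∧ IsOrthogonalTensor V ∧ IsFDiagonal S ∧
        A = tProd (tProd U S) (tTrans V) := by
  obtain ⟨Uh, Dh, Vh, hfac, hUh, hDh, hVh⟩ := exists_tDFT_factorization A
  obtain ⟨U, rfl⟩ := exists_tDFT_eq Uh hUh
  obtain ⟨S, rfl⟩ := exists_tDFT_eq Dh hDh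
  obtain ⟨V, rfl⟩ := exists_tDFT_eq Vh hVh
  refine ⟨U, S, V, .of_tDFT_mem_unitaryGroup fun ω => (hfac ω).1,
    .of_tDFT_mem_unitaryGroup fun ω => (hfac ω).2.1, .of_tDFT fun ω => (hfac ω).2.2.1,
    tDFT_injective (funext fun ω => ?_)⟩
  rw [tDFT_tProd, tDFT_tProd, tDFT_tTrans]
  exact (hfac ω).2.2.2
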